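/- Let U, V be subspaces of ℝ^n with orthogonal projections P_A, P_B, and define the two-sided residual iteration r_0 = y, s_k = (I-P_A) r_k, r_{k+1} = (I-P_B) s_k. Then the sum over all rounds of the fitted pieces, Σ_{k} (P_A r_k + P_B s_k), converges and equals the orthogonal projection of y onto U + V. -/

import Mathlib

/-!
Since `I - P_U` is the projection onto `Uᗮ`, the residuals are `r_k = (P_{Vᗮ} P_{Uᗮ})^k y`, and the
fitted pieces of round `k` add up to `r_k - r_{k+1}`, so the partial sums telescope to `y - r_K`.
This is von Neumann's alternating projection scheme: `T = P_B P_A` fixes `A ⊓ B`, maps `(A ⊓ B)ᗮ`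
into itself, and by the equality case of `‖P x‖ ≤ ‖x‖` strictly shrinks every nonzero vector of
`(A ⊓ B)ᗮ`; in finite dimension compactness of the unit sphere turns this into operator norm `< 1`
there. Hence `r_k → P_{Uᗮ ⊓ Vᗮ} y = y - P_{U ⊔ V} y`.
-/

open Submodule Filter Topology

noncomputable def proj {E : Type*} [NormedAddCommGroup E] [InnerProductSpace ℝ E]
    [FiniteDimensional ℝ E] (U : Submodule ℝ E) : E →ₗ[ℝ] E :=
  U.subtype ∘ₗ (orthogonalProjection U).toLinearMap

section StrictContraction

variable {𝕜 F G : Type*} [RCLike 𝕜] [NormedAddCommGroup F] [NormedSpace 𝕜 F]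
  [FiniteDimensional 𝕜 F] [NormedAddCommGroup G] [NormedSpace 𝕜 G]

theorem ContinuousLinearMap.opNorm_lt_one_of_norm_apply_lt (f : F →L[𝕜] G)
    (hf : ∀ x ≠ 0, ‖f x‖ < ‖x‖) : ‖f‖ < 1 := by
  have := FiniteDimensional.proper_rclike 𝕜 F
  rcases (Metric.sphere (0 : F) 1).eq_empty_or_nonempty with hS | hS
  · refine (f.opNorm_le_of_unit_norm le_rfl fun x hx => ?_).trans_lt one_pos
    simp [← mem_sphere_zero_iff_norm, hS] at hx
  · obtain ⟨x₀, hx₀, hmax⟩ :=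
      (isCompact_sphere (0 : F) 1).exists_isMaxOn hS
        (continuous_norm.comp f.continuous).continuousOn
    rw [mem_sphere_zero_iff_norm] at hx₀
    calc ‖f‖ ≤ ‖f x₀‖ := f.opNorm_le_of_unit_norm (norm_nonneg _) fun x hx =>
            hmax (mem_sphere_zero_iff_norm.2 hx)
      _ < 1 := hx₀ ▸ hf x₀ (by rintro rfl; simp at hx₀)

theorem tendsto_pow_apply_nhds_zero_of_norm_apply_lt (f : F →ₗ[𝕜] F)
    (hf : ∀ x ≠ 0, ‖f x‖ < ‖x‖) (x : F) :
    Tendsto (fun k : ℕ => (f ^ k) x) atTop (𝓝 0) := by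
  set g := LinearMap.toContinuousLinearMap f
  have hg : ‖g‖ < 1 := g.opNorm_lt_one_of_norm_apply_lt hf
  have hbound : ∀ k : ℕ, ‖(f ^ k) x‖ ≤ ‖g‖ ^ k * ‖x‖ := by
    intro k
    induction k with
    | zero => simp
    | succ k ih =>
      rw [pow_succ', Module.End.mul_apply, pow_succ', mul_assoc]
      exact (g.le_opNorm _).trans (mul_le_mul_of_nonneg_left ih (norm_nonneg g))
  refine squeeze_zero_norm hbound ?_
  simpa using (tendsto_pow_atTop_nhds_zero_of_lt_one (norm_nonneg g) hg).mul_const ‖x‖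

end StrictContraction

namespace Submodule

variable {𝕜 E : Type*} [RCLike 𝕜] [NormedAddCommGroup E] [InnerProductSpace 𝕜 E]

theorem starProjection_mem_orthogonal_of_le {A W : Submodule 𝕜 E} [A.HasOrthogonalProjection]
    (h : W ≤ A) {x : E} (hx : x ∈ Wᗮ) : A.starProjection x ∈ Wᗮ := by
  have hx' : A.starProjection x = x - Aᗮ.starProjection x := by simp
  rw [hx']
  exact Wᗮ.sub_mem hx (orthogonal_le h (coe_mem _))

theorem norm_starProjection_starProjection_lt {A B : Submodule 𝕜 E} [A.HasOrthogonalProjection]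
    [B.HasOrthogonalProjection] {x : E} (hx : x ∉ A ⊓ B) :
    ‖B.starProjection (A.starProjection x)‖ < ‖x‖ := by
  have hB := B.norm_starProjection_apply_le (A.starProjection x)
  have hA := A.norm_starProjection_apply_le x
  refine lt_of_le_of_ne (hB.trans hA) fun heq => hx ?_
  have hxA : x ∈ A := (A.mem_iff_norm_starProjection x).2 (le_antisymm hA (heq ▸ hB))
  rw [starProjection_eq_self_iff.2 hxA] at heq
  exact ⟨hxA, (B.mem_iff_norm_starProjection x).2 heq⟩

theorem tendsto_pow_starProjection_mul_starProjection [FiniteDimensional 𝕜 E]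
    (A B : Submodule 𝕜 E) (x : E) :
    Tendsto (fun k : ℕ => (((B.starProjection : E →ₗ[𝕜] E) * A.starProjection) ^ k) x) atTop
      (𝓝 ((A ⊓ B).starProjection x)) := by
  set T : Module.End 𝕜 E := (B.starProjection : E →ₗ[𝕜] E) * A.starProjection
  set W := A ⊓ B
  have hfix : ∀ k : ℕ, (T ^ k) (W.starProjection x) = W.starProjection x := fun k => by
    have hW : W.starProjection x ∈ A ⊓ B := coe_mem _
    have hT : T (W.starProjection x) = W.starProjection x := by
      change B.starProjection (A.starProjection _) = _
      rw [starProjection_eq_self_iff.2 hW.1, starProjection_eq_self_iff.2 hW.2]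
    rw [Module.End.pow_apply]
    exact Function.iterate_fixed hT k
  have hinv : ∀ z ∈ Wᗮ, T z ∈ Wᗮ := fun z hz =>
    starProjection_mem_orthogonal_of_le inf_le_right
      (starProjection_mem_orthogonal_of_le inf_le_left hz)
  have hcontr : ∀ z : Wᗮ, z ≠ 0 → ‖T.restrict hinv z‖ < ‖z‖ := by
    intro z hz
    exact norm_starProjection_starProjection_lt fun hzW =>
      hz (Subtype.ext (disjoint_def.1 W.orthogonal_disjoint _ hzW z.2))
  have hperp : Tendsto (fun k : ℕ => (T ^ k) (Wᗮ.starProjection x)) atTop (𝓝 0) := by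
    have hz : Wᗮ.starProjection x ∈ Wᗮ := coe_mem _
    have hcoe : ∀ k : ℕ, ((T.restrict hinv ^ k) ⟨_, hz⟩ : E) = (T ^ k) (Wᗮ.starProjection x) :=
      fun k => by rw [Module.End.pow_restrict]; rfl
    simpa only [Function.comp_def, hcoe, ZeroMemClass.coe_zero] using
      (continuous_subtype_val.tendsto 0).comp
        (tendsto_pow_apply_nhds_zero_of_norm_apply_lt _ hcontr ⟨_, hz⟩)
  have hsplit : ∀ k : ℕ, W.starProjection x + (T ^ k) (Wᗮ.starProjection x) = (T ^ k) x := by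
    intro k
    conv_rhs => rw [← W.starProjection_add_starProjection_orthogonal x]
    rw [map_add, hfix]
  have := (tendsto_const_nhds (x := W.starProjection x)).add hperp
  rw [add_zero] at this
  exact this.congr hsplit

end Submodule

theorem id_sub_proj_apply {E : Type*} [NormedAddCommGroup E] [InnerProductSpace ℝ E]
    [FiniteDimensional ℝ E] (U : Submodule ℝ E) (x : E) :
    (LinearMap.id - proj U : Module.End ℝ E) x = Uᗮ.starProjection x := by
  simp [proj]

theorem stmt13 {E : Type*} [NormedAddCommGroup E] [InnerProductSpace ℝ E] [FiniteDimensional ℝ E]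
    (U V : Submodule ℝ E) (y : E) (r s : ℕ → E) (hr0 : r 0 = y)
    (hs : ∀ k, s k = (LinearMap.id - proj U : Module.End ℝ E) (r k))
    (hr : ∀ k, r (k + 1) = (LinearMap.id - proj V : Module.End ℝ E) (s k)) :
    Tendsto (fun K : ℕ => ∑ k ∈ Finset.range K, (proj U (r k) + proj V (s k)))
      atTop (𝓝 (proj (U ⊔ V) y)) := by
  have hfit : ∀ k, proj U (r k) + proj V (s k) = r k - r (k + 1) := fun k => by
    rw [hr k, hs k]
    simp only [LinearMap.sub_apply, LinearMap.id_apply]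
    abel
  have hsum : ∀ K, ∑ k ∈ Finset.range K, (proj U (r k) + proj V (s k)) = y - r K := fun K => by
    simp only [hfit, Finset.sum_range_sub', hr0]
  have hpow : ∀ k, r k = (((Vᗮ.starProjection : E →ₗ[ℝ] E) * Uᗮ.starProjection) ^ k) y := by
    intro k
    induction k with
    | zero => exact hr0
    | succ k ih =>
      rw [hr k, hs k, id_sub_proj_apply, id_sub_proj_apply, ih, pow_succ', Module.End.mul_apply]
      rfl
  have hlim : Tendsto r atTop (𝓝 (y - proj (U ⊔ V) y)) := by
    have hW : (Uᗮ ⊓ Vᗮ).starProjection y = y - proj (U ⊔ V) y := by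
      simp only [inf_orthogonal, starProjection_orthogonal_val]
      rfl
    rw [← hW, funext hpow]
    exact Uᗮ.tendsto_pow_starProjection_mul_starProjection Vᗮ y
  simpa only [hsum, sub_sub_cancel] using (tendsto_const_nhds (x := y)).sub hlim
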